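/- Let ε > 0, δ ≥ 0, and let y : [0,∞) → ℝ be differentiable with y(0) = r² ≥ 0 and y'(t) ≤ 2ε² − 2y(t)(y(t) − δ) for all t ≥ 0, with y(t) ≥ 0. Then y(t) ≤ r*² + r²·exp(−2√(4ε² + δ²)·t) for all t ≥ 0, where r*² = (δ + √(4ε² + δ²))/2. -/

import Mathlib

/-!
With `s = √(4ε² + δ²)`, the stationary level `a = (δ + s)/2` is the positive root of the drift
`2ε² − 2y(y − δ) = −2(y − a)(y − a + s)`, so the drift is at most `−2s(y − a)`.
The linear comparison `y' ≤ −2s(y − a)` makes `(y − a)e^{2st}` antitone, hence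
`y(t) − a ≤ (r² − a)e^{−2st} ≤ r²e^{−2st}` since `a ≥ 0`.
-/

open Real Set

theorem antitoneOn_sub_mul_exp_of_hasDerivAt_le {y d : ℝ → ℝ} {a k : ℝ}
    (hy : ∀ t, HasDerivAt y (d t) t) (hd : ∀ t ≥ (0 : ℝ), d t ≤ -k * (y t - a)) :
    AntitoneOn (fun t => (y t - a) * exp (k * t)) (Ici 0) := by
  have hderiv : ∀ t, HasDerivAt (fun t => (y t - a) * exp (k * t))
      ((d t + k * (y t - a)) * exp (k * t)) t := fun t => by
    have hexp : HasDerivAt (fun t => exp (k * t)) (exp (k * t) * k) t := by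
      simpa using ((hasDerivAt_id t).const_mul k).exp
    exact (((hy t).sub_const a).mul hexp).congr_deriv (by ring)
  refine antitoneOn_of_hasDerivWithinAt_nonpos (convex_Ici 0)
    (fun t _ => (hderiv t).continuousAt.continuousWithinAt)
    (fun t _ => (hderiv t).hasDerivWithinAt) fun t ht => ?_
  rw [interior_Ici] at ht
  exact mul_nonpos_of_nonpos_of_nonneg (by linarith [hd t ht.le]) (exp_pos _).le

theorem sub_le_mul_exp_of_hasDerivAt_le {y d : ℝ → ℝ} {a k : ℝ}
    (hy : ∀ t, HasDerivAt y (d t) t) (hd : ∀ t ≥ (0 : ℝ), d t ≤ -k * (y t - a))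
    {t : ℝ} (ht : 0 ≤ t) : y t - a ≤ (y 0 - a) * exp (-k * t) := by
  have h := antitoneOn_sub_mul_exp_of_hasDerivAt_le hy hd self_mem_Ici ht ht
  simp only [mul_zero, exp_zero, mul_one] at h
  rw [neg_mul, exp_neg, ← div_eq_mul_inv, le_div_iff₀ (exp_pos _)]
  exact h

theorem hopf_drift_le (ε δ y : ℝ) :
    2 * ε ^ 2 - 2 * y * (y - δ)
      ≤ -(2 * √(4 * ε ^ 2 + δ ^ 2)) * (y - (δ + √(4 * ε ^ 2 + δ ^ 2)) / 2) := by
  nlinarith [sq_sqrt (by positivity : 0 ≤ 4 * ε ^ 2 + δ ^ 2),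
    sq_nonneg (y - (δ + √(4 * ε ^ 2 + δ ^ 2)) / 2)]

theorem hopf_stationary_level_nonneg (ε δ : ℝ) : 0 ≤ (δ + √(4 * ε ^ 2 + δ ^ 2)) / 2 := by
  have hδ : |δ| ≤ √(4 * ε ^ 2 + δ ^ 2) := abs_le_sqrt (by nlinarith [sq_nonneg ε])
  linarith [neg_abs_le δ]

theorem hopf_ultimate_bound_supercritical
    (ε δ r : ℝ) (y d : ℝ → ℝ)
    (hy0 : y 0 = r ^ 2)
    (hy : ∀ t, HasDerivAt y (d t) t)
    (hd : ∀ t ≥ (0 : ℝ), d t ≤ 2 * ε ^ 2 - 2 * y t * (y t - δ)) :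
    ∀ t ≥ (0 : ℝ),
      y t ≤ (δ + Real.sqrt (4 * ε ^ 2 + δ ^ 2)) / 2
        + r ^ 2 * Real.exp (-2 * Real.sqrt (4 * ε ^ 2 + δ ^ 2) * t) := by
  intro t ht
  have hbound := sub_le_mul_exp_of_hasDerivAt_le hy
    (fun t ht => (hd t ht).trans (hopf_drift_le ε δ (y t))) ht
  rw [hy0, neg_mul_eq_neg_mul] at hbound
  nlinarith [mul_nonneg (hopf_stationary_level_nonneg ε δ)
    (exp_pos (-2 * √(4 * ε ^ 2 + δ ^ 2) * t)).le]
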